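/- Let n, A, B, C be positive integers, and fix a set of A columns, a set of B rows, and a set of C diagonals (each of either orientation) of the n×n board. Then the number of board squares lying simultaneously on one of the chosen columns, one of the chosen rows, and one of the chosen diagonals is at most f(A + B, C) + δ_{A+B}. -/

import Mathlib

/-- The n×n board: squares (x,y) ∈ ℤ×ℤ with 1 ≤ x ≤ n and 1 ≤ y ≤ n. -/
noncomputable def board (n : ℕ) : Finset (ℤ × ℤ) := Finset.Icc 1 (n : ℤ) ×ˢ Finset.Icc 1 (n : ℤ)

/-- A line of the board: a row (fixed y), a column (fixed x), a positive
diagonal (fixed x − y), or a negative diagonal (fixed x + y). -/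
inductive Line : Type where
  | row : ℤ → Line
  | col : ℤ → Line
  | posDiag : ℤ → Line
  | negDiag : ℤ → Line
deriving DecidableEq

/-- The defining condition for a point to be on a given line. -/
def Line.pred : Line → ℤ × ℤ → Prop
  | .row b, p => p.2 = b
  | .col a, p => p.1 = a
  | .posDiag d, p => p.1 - p.2 = d
  | .negDiag s, p => p.1 + p.2 = s

instance (L : Line) (p : ℤ × ℤ) : Decidable (L.pred p) :=
  match L with
  | .row b => inferInstanceAs (Decidable (p.2 = b))
  | .col a => inferInstanceAs (Decidable (p.1 = a))
  | .posDiag d => inferInstanceAs (Decidable (p.1 - p.2 = d))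
  | .negDiag s => inferInstanceAs (Decidable (p.1 + p.2 = s))

/-- The set of squares of the n×n board lying on a line. -/
noncomputable def Line.squares (n : ℕ) (L : Line) : Finset (ℤ × ℤ) := (board n).filter L.pred

/-- The length of a line: its number of board squares. -/
noncomputable def Line.length (n : ℕ) (L : Line) : ℕ := (L.squares n).card

/-- Whether a line is a diagonal (of either orientation). -/
def Line.isDiag : Line → Prop
  | .posDiag _ => True
  | .negDiag _ => True
  | _ => False

/-- The set of board squares attacked by a placement S of queens: squares q on
the board such that some queen p ∈ S with p ≠ q shares a row, column, or
diagonal with q. -/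
noncomputable def attacked (n : ℕ) (S : Finset (ℤ × ℤ)) : Finset (ℤ × ℤ) :=
  S.biUnion fun p => (board n).filter fun q =>
    q ≠ p ∧ (p.1 = q.1 ∨ p.2 = q.2 ∨ p.1 - p.2 = q.1 - q.2 ∨ p.1 + p.2 = q.1 + q.2)

/-- G(m) = ⌊m²/12⌋ + 1 if m ≡ 3, 6, 9 (mod 12) or m = 10; ⌊m²/12⌋ otherwise. -/
def G (m : ℕ) : ℕ :=
  if m % 12 = 3 ∨ m % 12 = 6 ∨ m % 12 = 9 ∨ m = 10 then m ^ 2 / 12 + 1 else m ^ 2 / 12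

/-- f(s,C) = Σ_{ℓ=1}^{⌊(s+2)/4⌋} min(2C, 2s + 4 − 8ℓ). -/
def f (s C : ℕ) : ℕ := ∑ ℓ ∈ Finset.Icc 1 ((s + 2) / 4), min (2 * C) (2 * s + 4 - 8 * ℓ)

/-- δ_s = 1 if s ≡ 2 (mod 4) and δ_s = 0 otherwise. -/
def δ (s : ℕ) : ℕ := if s % 4 = 2 then 1 else 0

/-!
Measure each square of the grid `cols × rows` by its depth, the (1-based) distance to the
boundary of the grid; the squares of depth `ℓ` form the `ℓ`-th concentric ring, of size at most
`2(A + B) + 4 - 8ℓ`, except for a single central square when `A = B = 2ℓ - 1`. A diagonal is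
strictly monotone in both coordinates, so of three of its squares the middle one is strictly
deeper than the shallower outer one: each diagonal meets each ring at most twice, and a ring
holds at most `2C` covered squares. Summing the smaller of the two bounds over the rings
`ℓ ≤ (A + B + 2) / 4` gives `f (A + B) C + δ (A + B)`.
-/

open Finset

namespace Finset

variable {α : Type*} [LinearOrder α] (s : Finset α)

def rankBelow (x : α) : ℕ := #{c ∈ s | c ≤ x}

def rankAbove (x : α) : ℕ := #{c ∈ s | x ≤ c}

def depth (x : α) : ℕ := min (s.rankBelow x) (s.rankAbove x)

variable {s}

lemma rankBelow_add_rankAbove {x : α} (hx : x ∈ s) :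
    s.rankBelow x + s.rankAbove x = #s + 1 := by
  have hAbove : {c ∈ s | x ≤ c} = insert x {c ∈ s | ¬c ≤ x} := by
    ext c
    simp only [mem_filter, mem_insert, not_le]
    constructor
    · rintro ⟨hc, hxc⟩
      exact hxc.eq_or_lt.imp Eq.symm (fun h => ⟨hc, h⟩)
    · rintro (rfl | ⟨hc, hxc⟩)
      exacts [⟨hx, le_rfl⟩, ⟨hc, hxc.le⟩]
  rw [rankBelow, rankAbove, hAbove, card_insert_of_notMem (by simp), ← add_assoc,
    card_filter_add_card_filter_not]

lemma rankBelow_lt_rankBelow {x y : α} (hy : y ∈ s) (hxy : x < y) :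
    s.rankBelow x < s.rankBelow y := by
  refine card_lt_card ⟨fun c hc => ?_, fun h => ?_⟩
  · simp only [mem_filter] at hc ⊢
    exact ⟨hc.1, hc.2.trans hxy.le⟩
  · exact (mem_filter.mp (h (mem_filter.mpr ⟨hy, le_rfl⟩))).2.not_gt hxy

lemma rankAbove_lt_rankAbove {x y : α} (hx : x ∈ s) (hxy : x < y) :
    s.rankAbove y < s.rankAbove x := by
  refine card_lt_card ⟨fun c hc => ?_, fun h => ?_⟩
  · simp only [mem_filter] at hc ⊢
    exact ⟨hc.1, hxy.le.trans hc.2⟩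
  · exact (mem_filter.mp (h (mem_filter.mpr ⟨hx, le_rfl⟩))).2.not_gt hxy

lemma rankBelow_injOn : Set.InjOn s.rankBelow s :=
  StrictMonoOn.injOn fun _ _ _ hy hxy => rankBelow_lt_rankBelow hy hxy

lemma rankAbove_injOn : Set.InjOn s.rankAbove s :=
  StrictAntiOn.injOn fun _ hx _ _ hxy => rankAbove_lt_rankAbove hx hxy

lemma one_le_depth {x : α} (hx : x ∈ s) : 1 ≤ s.depth x :=
  le_min (card_pos.mpr ⟨x, mem_filter.mpr ⟨hx, le_rfl⟩⟩)
    (card_pos.mpr ⟨x, mem_filter.mpr ⟨hx, le_rfl⟩⟩)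

lemma two_mul_depth_le {x : α} (hx : x ∈ s) : 2 * s.depth x ≤ #s + 1 := by
  have := rankBelow_add_rankAbove hx
  unfold depth
  omega

lemma min_depth_lt_depth {x y z : α} (hy : y ∈ s) (hxy : x < y) (hyz : y < z) :
    min (s.depth x) (s.depth z) < s.depth y :=
  lt_min
    ((min_le_left _ _).trans_lt ((min_le_left _ _).trans_lt (rankBelow_lt_rankBelow hy hxy)))
    ((min_le_right _ _).trans_lt ((min_le_right _ _).trans_lt (rankAbove_lt_rankAbove hy hyz)))

lemma card_filter_le_depth_le (ℓ : ℕ) :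
    #{x ∈ s | ℓ ≤ s.depth x} ≤ #s + 2 - 2 * ℓ := by
  have hmaps : Set.MapsTo s.rankBelow ({x ∈ s | ℓ ≤ s.depth x} : Finset α)
      (Icc ℓ (#s + 1 - ℓ)) := by
    intro x hx
    obtain ⟨hx, hℓ⟩ := mem_filter.mp (mem_coe.mp hx)
    have := rankBelow_add_rankAbove hx
    simp only [depth, le_min_iff] at hℓ
    simp only [coe_Icc, Set.mem_Icc]
    omega
  have := card_le_card_of_injOn _ hmaps
    (rankBelow_injOn.mono (coe_subset.mpr (filter_subset _ _)))
  rw [Nat.card_Icc] at this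
  omega

lemma card_filter_depth_eq_le (ℓ : ℕ) :
    #{x ∈ s | s.depth x = ℓ} ≤ min 2 (#s + 2 - 2 * ℓ) := by
  have hsub : {x ∈ s | s.depth x = ℓ} ⊆
      {x ∈ s | s.rankBelow x = ℓ} ∪ {x ∈ s | s.rankAbove x = ℓ} := by
    intro x hx
    obtain ⟨hx, hℓ⟩ := mem_filter.mp hx
    rw [depth] at hℓ
    rcases min_choice (s.rankBelow x) (s.rankAbove x) with h | h <;> rw [h] at hℓ <;>
      simp [hx, hℓ]
  have hBelow : #{x ∈ s | s.rankBelow x = ℓ} ≤ 1 := card_le_one.mpr fun x hx y hy =>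
    rankBelow_injOn (mem_filter.mp hx).1 (mem_filter.mp hy).1
      ((mem_filter.mp hx).2.trans (mem_filter.mp hy).2.symm)
  have hAbove : #{x ∈ s | s.rankAbove x = ℓ} ≤ 1 := card_le_one.mpr fun x hx y hy =>
    rankAbove_injOn (mem_filter.mp hx).1 (mem_filter.mp hy).1
      ((mem_filter.mp hx).2.trans (mem_filter.mp hy).2.symm)
  have := (card_le_card hsub).trans (card_union_le _ _)
  have := (card_le_card (monotone_filter_right s fun _ _ (h : s.depth _ = ℓ) => h.ge)).trans
    (card_filter_le_depth_le ℓ)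
  omega

lemma card_le_two_of_forall_not_lt_lt {X : Finset α}
    (h : ∀ a ∈ X, ∀ b ∈ X, ∀ c ∈ X, a < b → b < c → False) : #X ≤ 2 := by
  by_contra! hX
  have hne : X.Nonempty := card_pos.mp (by omega)
  obtain ⟨b, hb⟩ : ((X.erase (X.min' hne)).erase (X.max' hne)).Nonempty := by
    rw [← card_pos]
    have := pred_card_le_card_erase (s := X) (a := X.min' hne)
    have := pred_card_le_card_erase (s := X.erase (X.min' hne)) (a := X.max' hne)
    omega
  have hb' := mem_of_mem_erase hb
  have hb'' : b ∈ X.erase (X.max' hne) :=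
    mem_erase.mpr ⟨ne_of_mem_erase hb, mem_of_mem_erase hb'⟩
  exact h _ (X.min'_mem hne) b (mem_of_mem_erase hb') _ (X.max'_mem hne)
    (X.min'_lt_of_mem_erase_min' hne hb') (X.lt_max'_of_mem_erase_max' hne hb'')

end Finset

section Grid

variable {α β : Type*} [LinearOrder α] [LinearOrder β]

def gridDepth (cols : Finset α) (rows : Finset β) (p : α × β) : ℕ :=
  min (cols.depth p.1) (rows.depth p.2)

variable {cols : Finset α} {rows : Finset β}

lemma gridDepth_mem_Icc {p : α × β} (hp : p ∈ cols ×ˢ rows) :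
    gridDepth cols rows p ∈ Icc 1 ((#cols + #rows + 2) / 4) := by
  obtain ⟨h1, h2⟩ := mem_product.mp hp
  have := one_le_depth h1
  have := one_le_depth h2
  have := two_mul_depth_le h1
  have := two_mul_depth_le h2
  rw [mem_Icc, gridDepth]
  omega

lemma min_gridDepth_lt_gridDepth {p q r : α × β} (hr : r ∈ cols ×ˢ rows)
    (h₁ : p.1 < r.1) (h₂ : r.1 < q.1)
    (h₃ : p.2 < r.2 ∧ r.2 < q.2 ∨ q.2 < r.2 ∧ r.2 < p.2) :
    min (gridDepth cols rows p) (gridDepth cols rows q) < gridDepth cols rows r := by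
  obtain ⟨hr₁, hr₂⟩ := mem_product.mp hr
  have hcol := min_depth_lt_depth hr₁ h₁ h₂
  have hrow : min (rows.depth p.2) (rows.depth q.2) < rows.depth r.2 := by
    rcases h₃ with ⟨h, h'⟩ | ⟨h, h'⟩
    · exact min_depth_lt_depth hr₂ h h'
    · exact min_comm (rows.depth p.2) _ ▸ min_depth_lt_depth hr₂ h h'
  simp only [gridDepth] at hcol hrow ⊢
  omega

-- The indicator pays for the one-square ring when `#cols = #rows = 2ℓ - 1`.
lemma card_filter_gridDepth_eq_le (ℓ : ℕ) :
    #{p ∈ cols ×ˢ rows | gridDepth cols rows p = ℓ} ≤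
      2 * (#cols + #rows) + 4 - 8 * ℓ + if 4 * ℓ = #cols + #rows + 2 then 1 else 0 := by
  have hsub : {p ∈ cols ×ˢ rows | gridDepth cols rows p = ℓ} ⊆
      {x ∈ cols | cols.depth x = ℓ} ×ˢ {y ∈ rows | ℓ ≤ rows.depth y} ∪
        {x ∈ cols | ℓ + 1 ≤ cols.depth x} ×ˢ {y ∈ rows | rows.depth y = ℓ} := by
    intro p hp
    obtain ⟨hp, hℓ⟩ := mem_filter.mp hp
    obtain ⟨h₁, h₂⟩ := mem_product.mp hp
    rw [gridDepth] at hℓ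
    simp only [mem_union, mem_product, mem_filter, h₁, h₂, true_and]
    omega
  have hcard := (card_le_card hsub).trans (card_union_le _ _)
  rw [card_product, card_product] at hcard
  have hc₁ := card_filter_depth_eq_le (s := cols) ℓ
  have hr₁ := card_filter_le_depth_le (s := rows) ℓ
  have hc₂ := card_filter_le_depth_le (s := cols) (ℓ + 1)
  have hr₂ := card_filter_depth_eq_le (s := rows) ℓ
  generalize #{x ∈ cols | cols.depth x = ℓ} = c₁ at hcard hc₁
  generalize #{x ∈ cols | ℓ + 1 ≤ cols.depth x} = c₂ at hcard hc₂
  generalize #{y ∈ rows | rows.depth y = ℓ} = r₂ at hcard hr₂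
  generalize #{y ∈ rows | ℓ ≤ rows.depth y} = r₁ at hcard hr₁
  obtain rfl | rfl | rfl : c₁ = 0 ∨ c₁ = 1 ∨ c₁ = 2 := by omega
  all_goals obtain rfl | rfl | rfl : r₂ = 0 ∨ r₂ = 1 ∨ r₂ = 2 := by omega
  all_goals split_ifs <;> omega

end Grid

lemma Line.eq_of_fst_eq {L : Line} (hL : L.isDiag) {p q : ℤ × ℤ} (hp : L.pred p)
    (hq : L.pred q) (h : p.1 = q.1) : p = q := by
  cases L <;> simp only [Line.isDiag, Line.pred] at hL hp hq <;> ext <;> omega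

lemma Line.snd_between {L : Line} (hL : L.isDiag) {p q r : ℤ × ℤ} (hp : L.pred p)
    (hq : L.pred q) (hr : L.pred r) (h₁ : p.1 < r.1) (h₂ : r.1 < q.1) :
    p.2 < r.2 ∧ r.2 < q.2 ∨ q.2 < r.2 ∧ r.2 < p.2 := by
  cases L <;> simp only [Line.isDiag, Line.pred] at hL hp hq hr <;> omega

lemma card_filter_pred_gridDepth_eq_le_two {L : Line} (hL : L.isDiag)
    {cols rows : Finset ℤ} {S : Finset (ℤ × ℤ)} (hS : S ⊆ cols ×ˢ rows) (ℓ : ℕ) :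
    #{p ∈ S | L.pred p ∧ gridDepth cols rows p = ℓ} ≤ 2 := by
  have hinj : Set.InjOn Prod.fst
      ({p ∈ S | L.pred p ∧ gridDepth cols rows p = ℓ} : Finset (ℤ × ℤ)) :=
    fun p hp q hq => Line.eq_of_fst_eq hL (mem_filter.mp hp).2.1 (mem_filter.mp hq).2.1
  rw [← card_image_of_injOn hinj]
  refine card_le_two_of_forall_not_lt_lt ?_
  simp only [mem_image]
  rintro _ ⟨p, hp, rfl⟩ _ ⟨r, hr, rfl⟩ _ ⟨q, hq, rfl⟩ h₁ h₂
  obtain ⟨-, hpL, hpℓ⟩ := mem_filter.mp hp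
  obtain ⟨hrS, hrL, hrℓ⟩ := mem_filter.mp hr
  obtain ⟨-, hqL, hqℓ⟩ := mem_filter.mp hq
  have := min_gridDepth_lt_gridDepth (hS hrS) h₁ h₂ (Line.snd_between hL hpL hqL hrL h₁ h₂)
  rw [hpℓ, hqℓ, hrℓ, min_self] at this
  exact this.false

lemma sum_ite_four_mul_eq_δ (s : ℕ) :
    ∑ ℓ ∈ Icc 1 ((s + 2) / 4), (if 4 * ℓ = s + 2 then 1 else 0) = δ s := by
  rw [sum_boole, δ, Nat.cast_id]
  split_ifs with h
  · rw [card_eq_one]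
    exact ⟨(s + 2) / 4, by ext; simp only [mem_filter, mem_Icc, mem_singleton]; omega⟩
  · rw [card_eq_zero, filter_eq_empty_iff]
    intro ℓ hℓ
    rw [mem_Icc] at hℓ
    omega

lemma card_filter_gridDepth_eq_le_two_mul_card {cols rows : Finset ℤ} {S : Finset (ℤ × ℤ)}
    {diags : Finset Line} (hS : S ⊆ cols ×ˢ rows) (hdiags : ∀ L ∈ diags, L.isDiag)
    (hcover : ∀ p ∈ S, ∃ L ∈ diags, L.pred p) (ℓ : ℕ) :
    #{p ∈ S | gridDepth cols rows p = ℓ} ≤ 2 * #diags := by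
  calc #{p ∈ S | gridDepth cols rows p = ℓ}
      ≤ #(diags.biUnion fun L => {p ∈ S | L.pred p ∧ gridDepth cols rows p = ℓ}) := by
        refine card_le_card fun p hp => ?_
        obtain ⟨hpS, hℓ⟩ := mem_filter.mp hp
        obtain ⟨L, hL, hLp⟩ := hcover p hpS
        exact mem_biUnion.mpr ⟨L, hL, mem_filter.mpr ⟨hpS, hLp, hℓ⟩⟩
    _ ≤ #diags * 2 := card_biUnion_le_card_mul _ _ _ fun L hL =>
        card_filter_pred_gridDepth_eq_le_two (hdiags L hL) hS ℓ
    _ = 2 * #diags := mul_comm _ _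

theorem triple_intersection_bound_general (n A B C : ℕ)
    (cols rows : Finset ℤ) (diags : Finset Line)
    (hcolsA : cols.card = A) (hrowsB : rows.card = B) (hdiagsC : diags.card = C)
    (hdiag : ∀ L ∈ diags, L.isDiag ∧ (L.squares n).Nonempty) :
    ((board n).filter fun p =>
        p.1 ∈ cols ∧ p.2 ∈ rows ∧ ∃ L ∈ diags, L.pred p).card
      ≤ f (A + B) C + δ (A + B) := by
  subst hcolsA hrowsB hdiagsC
  set S := (board n).filter fun p => p.1 ∈ cols ∧ p.2 ∈ rows ∧ ∃ L ∈ diags, L.pred p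
  have hS : S ⊆ cols ×ˢ rows := fun p hp =>
    mem_product.mpr ⟨(mem_filter.mp hp).2.1, (mem_filter.mp hp).2.2.1⟩
  have hring (ℓ : ℕ) : #{p ∈ S | gridDepth cols rows p = ℓ} ≤
      min (2 * #diags) (2 * (#cols + #rows) + 4 - 8 * ℓ) +
        if 4 * ℓ = #cols + #rows + 2 then 1 else 0 := by
    have hcover := card_filter_gridDepth_eq_le_two_mul_card hS (fun L hL => (hdiag L hL).1)
      (fun p hp => (mem_filter.mp hp).2.2.2) ℓ
    have hsize := (card_le_card (filter_subset_filter _ hS)).trans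
      (card_filter_gridDepth_eq_le (cols := cols) (rows := rows) ℓ)
    split_ifs at hsize ⊢ <;> omega
  calc #S = ∑ ℓ ∈ Icc 1 ((#cols + #rows + 2) / 4), #{p ∈ S | gridDepth cols rows p = ℓ} :=
        card_eq_sum_card_fiberwise fun p hp => gridDepth_mem_Icc (hS hp)
    _ ≤ ∑ ℓ ∈ Icc 1 ((#cols + #rows + 2) / 4),
          (min (2 * #diags) (2 * (#cols + #rows) + 4 - 8 * ℓ) +
            if 4 * ℓ = #cols + #rows + 2 then 1 else 0) := sum_le_sum fun ℓ _ => hring ℓ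
    _ = f (#cols + #rows) #diags + δ (#cols + #rows) := by
        rw [sum_add_distrib, sum_ite_four_mul_eq_δ]
        rfl

/-- For any choice of A columns, B rows and C diagonals of the
n×n board, the number of board squares lying on a chosen column, a chosen row
and a chosen diagonal is at most f(A + B, C) + δ_{A+B}. -/
theorem triple_intersection_bound (n A B C : ℕ) (hn : 0 < n) (hA : 0 < A)
    (hB : 0 < B) (hC : 0 < C)
    (cols rows : Finset ℤ) (diags : Finset Line)
    (hcols : cols ⊆ Finset.Icc 1 (n : ℤ)) (hrows : rows ⊆ Finset.Icc 1 (n : ℤ))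
    (hcolsA : cols.card = A) (hrowsB : rows.card = B) (hdiagsC : diags.card = C)
    (hdiag : ∀ L ∈ diags, L.isDiag ∧ (L.squares n).Nonempty) :
    ((board n).filter fun p =>
        p.1 ∈ cols ∧ p.2 ∈ rows ∧ ∃ L ∈ diags, L.pred p).card
      ≤ f (A + B) C + δ (A + B) :=
  triple_intersection_bound_general n A B C cols rows diags hcolsA hrowsB hdiagsC hdiag
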